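/- The plurisubharmonic metric is bounded above by the Kobayashi metric: for any domain Ω ⊂ ℂⁿ, P ∈ Ω, ξ ∈ ℂⁿ, F_P^Ω(P, ξ) ≤ F_K^Ω(P, ξ). -/

import Mathlib

open Complex Metric Set Filter Asymptotics

noncomputable section

/-- Subharmonicity via continuity and the sub-mean-value property on circles. -/
def SubharmonicOn (u : ℂ → ℝ) (s : Set ℂ) : Prop :=
  ContinuousOn u s ∧ ∀ z : ℂ, ∀ r : ℝ, 0 < r → closedBall z r ⊆ s →
    u z ≤ (2 * Real.pi)⁻¹ *
      ∫ θ in (0:ℝ)..(2 * Real.pi), u (z + (r : ℂ) * Complex.exp (θ * Complex.I))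

/-- The mixed Wirtinger derivative ∂²u/∂z∂z̄ = (1/4)Δu of a real-valued function on ℂ. -/
def mixedDeriv (u : ℂ → ℝ) (z : ℂ) : ℝ :=
  (1 / 4) * (fderiv ℝ (fun w => fderiv ℝ u w 1) z 1 +
             fderiv ℝ (fun w => fderiv ℝ u w Complex.I) z Complex.I)

/-- The Levi form Σᵢⱼ ∂²u/∂zᵢ∂z̄ⱼ(P) ξᵢ ξ̄ⱼ, computed along the complex line P + tξ. -/
def leviForm {n : ℕ} (u : (Fin n → ℂ) → ℝ) (P ξ : Fin n → ℂ) : ℝ :=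
  mixedDeriv (fun t => u (P + t • ξ)) 0

/-- Plurisubharmonicity: subharmonic along every complex line. -/
def PSHOn {n : ℕ} (u : (Fin n → ℂ) → ℝ) (s : Set (Fin n → ℂ)) : Prop :=
  ∀ a b : Fin n → ℂ, SubharmonicOn (fun t => u (a + t • b)) {t : ℂ | a + t • b ∈ s}

/-- `log u` plurisubharmonic, via the standard characterization: `u ≥ 0` and
`u·|e^{L}|` is plurisubharmonic for every complex-linear functional `L`. -/
def LogPSHOn {n : ℕ} (u : (Fin n → ℂ) → ℝ) (s : Set (Fin n → ℂ)) : Prop :=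
  (∀ z ∈ s, 0 ≤ u z) ∧
  ∀ L : (Fin n → ℂ) →ₗ[ℂ] ℂ,
    PSHOn (fun z => u z * ‖Complex.exp (L z)‖) s

/-- `log u` subharmonic on a planar set, via the analogous characterization. -/
def LogSubharmonicOn (u : ℂ → ℝ) (s : Set ℂ) : Prop :=
  (∀ z ∈ s, 0 ≤ u z) ∧
  ∀ α : ℂ, SubharmonicOn (fun z => u z * ‖Complex.exp (α * z)‖) s

/-- Candidate functions for the Sibony metric at `P`. -/
def SibonyCandidate {n : ℕ} (Ω : Set (Fin n → ℂ)) (P : Fin n → ℂ)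
    (u : (Fin n → ℂ) → ℝ) : Prop :=
  ContDiffAt ℝ 2 u P ∧ u P = 0 ∧ (∀ z ∈ Ω, 0 ≤ u z ∧ u z ≤ 1) ∧ LogPSHOn u Ω

/-- The Sibony metric. -/
def sibonyMetric {n : ℕ} (Ω : Set (Fin n → ℂ)) (P ξ : Fin n → ℂ) : ℝ :=
  sSup {x : ℝ | ∃ u, SibonyCandidate Ω P u ∧ x = Real.sqrt (leviForm u P ξ)}

/-- The Carathéodory metric. -/
def caratheodoryMetric {n : ℕ} (Ω : Set (Fin n → ℂ)) (P ξ : Fin n → ℂ) : ℝ :=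
  sSup {x : ℝ | ∃ f : (Fin n → ℂ) → ℂ, DifferentiableOn ℂ f Ω ∧
    (∀ z ∈ Ω, ‖f z‖ < 1) ∧ f P = 0 ∧ x = ‖fderiv ℂ f P ξ‖}

/-- The Kobayashi metric. -/
def kobayashiMetric {n : ℕ} (Ω : Set (Fin n → ℂ)) (P ξ : Fin n → ℂ) : ℝ :=
  sInf {α : ℝ | 0 < α ∧ ∃ φ : ℂ → (Fin n → ℂ), DifferentiableOn ℂ φ (ball 0 1) ∧
    (∀ z ∈ ball (0:ℂ) 1, φ z ∈ Ω) ∧ φ 0 = P ∧ fderiv ℂ φ 0 1 = α⁻¹ • ξ}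

/-- The plurisubharmonic metric of Section 4: candidates are C² near `P`, vanish at `P`, and
are controlled along an extremal Kobayashi disc. -/
def pshMetric {n : ℕ} (Ω : Set (Fin n → ℂ)) (P ξ : Fin n → ℂ) : ℝ :=
  sSup {x : ℝ | ∃ u : (Fin n → ℂ) → ℝ, ContDiffAt ℝ 2 u P ∧ u P = 0 ∧
    (∃ f : ℂ → (Fin n → ℂ), DifferentiableOn ℂ f (ball 0 1) ∧
      (∀ z ∈ ball (0:ℂ) 1, f z ∈ closure Ω) ∧ f 0 = P ∧
      fderiv ℂ f 0 1 = (kobayashiMetric Ω P ξ)⁻¹ • ξ ∧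
      (∀ z ∈ ball (0:ℂ) 1, 0 ≤ u (f z) ∧ u (f z) ≤ 1) ∧
      SubharmonicOn (fun z => u (f z) / ‖z‖ ^ 2) (ball (0:ℂ) 1 \ {0})) ∧
    x = Real.sqrt (leviForm u P ξ)}

/-!
Write `g = u ∘ f` for a candidate `u` and its disc `f`. A holomorphic `f` is harmonic, so the
first-order terms of the chain rule cancel in the Laplacian of `g`: `∂∂̄g(0)` is the Levi form of
`u` at `P` in the direction `f'(0) = ξ / F_K(P, ξ)`, i.e. `F_K(P, ξ)⁻²` times the Levi form in the
direction `ξ`. It remains to show `∂∂̄g(0) ≤ 1`.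

Since `g ≥ 0 = g(0)` and `g` is `C²`, the function `v = g / |z|²` is bounded near `0`. Adding the
harmonic function `ε log |z|`, which is very negative on a small circle around the puncture, the
maximum principle on annuli gives `v ≤ 1 / R²` on `0 < |z| ≤ R` (because `g ≤ 1`), hence
`g(z) ≤ |z|²` on the disc. Comparing with the second-order Taylor expansion of `g` at `0` gives
`D²g(0)(d, d) ≤ 2` for every unit `d`, and `∂∂̄g(0) = (D²g(0)(1, 1) + D²g(0)(i, i)) / 4 ≤ 1`.

If `F_K(P, ξ) = 0` and `ξ ≠ 0`, the constant disc makes every `C²` function vanishing at `P`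
admissible; the candidate values are then unbounded and `sSup` returns its junk value `0`.
-/

open Topology

section SecondOrder

variable {E F G : Type*} [NormedAddCommGroup E] [NormedSpace ℝ E] [NormedAddCommGroup F]
  [NormedSpace ℝ F] [NormedAddCommGroup G] [NormedSpace ℝ G]

theorem ContDiffAt.fderiv_fderiv_comp_apply {u : F → G} {f : E → F} {x : E}
    (hu : ContDiffAt ℝ 2 u (f x)) (hf : ContDiffAt ℝ 2 f x) (v w : E) :
    fderiv ℝ (fderiv ℝ (u ∘ f)) x v w =
      fderiv ℝ (fderiv ℝ u) (f x) (fderiv ℝ f x v) (fderiv ℝ f x w) +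
        fderiv ℝ u (f x) (fderiv ℝ (fderiv ℝ f) x v w) := by
  have hu' : ∀ᶠ y in 𝓝 x, DifferentiableAt ℝ u (f y) :=
    hf.continuousAt.eventually ((hu.eventually (by simp)).mono
      fun y hy => hy.differentiableAt two_ne_zero)
  have hf' : ∀ᶠ y in 𝓝 x, DifferentiableAt ℝ f y :=
    (hf.eventually (by simp)).mono fun y hy => hy.differentiableAt two_ne_zero
  have hcomp : fderiv ℝ (u ∘ f) =ᶠ[𝓝 x] fun y => (fderiv ℝ u (f y)).comp (fderiv ℝ f y) := by
    filter_upwards [hu', hf'] with y huy hfy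
    exact fderiv_comp y huy hfy
  have hDu : HasFDerivAt (fun y => fderiv ℝ u (f y))
      ((fderiv ℝ (fderiv ℝ u) (f x)).comp (fderiv ℝ f x)) x :=
    ((hu.fderiv_right (m := 1) le_rfl).differentiableAt one_ne_zero).hasFDerivAt.comp x
      (hf.differentiableAt two_ne_zero).hasFDerivAt
  have hDf : HasFDerivAt (fderiv ℝ f) (fderiv ℝ (fderiv ℝ f) x) x :=
    ((hf.fderiv_right (m := 1) le_rfl).differentiableAt one_ne_zero).hasFDerivAt
  rw [hcomp.fderiv_eq, (hDu.clm_comp hDf).fderiv]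
  simp [add_comm]

theorem ContDiffAt.isLittleO_taylor_two {g : E → F} {x : E} (hg : ContDiffAt ℝ 2 g x) :
    (fun y => g (x + y) - g x - fderiv ℝ g x y - (2 : ℝ)⁻¹ • fderiv ℝ (fderiv ℝ g) x y y)
      =o[𝓝 0] fun y => ‖y‖ ^ 2 := by
  set B := fderiv ℝ (fderiv ℝ g) x
  obtain ⟨δ, hδ, hball⟩ := Metric.eventually_nhds_iff_ball.1
    ((hg.eventually (by simp)).mono fun y hy => hy.differentiableAt two_ne_zero)
  have hsymm : ∀ v w, B v w = B w v := hg.isSymmSndFDerivAt (by simp)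
  have hderiv : ∀ y ∈ ball (0 : E) δ, HasFDerivAt
      (fun y => g (x + y) - fderiv ℝ g x y - (2 : ℝ)⁻¹ • B y y)
      (fderiv ℝ g (x + y) - fderiv ℝ g x - B y) y := by
    intro y hy
    have hgy : HasFDerivAt (fun y => g (x + y)) (fderiv ℝ g (x + y)) y := by
      simpa [Function.comp_def] using
        (hball (x + y) (by simpa using hy)).hasFDerivAt.comp y ((hasFDerivAt_id y).const_add x)
    have hBy : HasFDerivAt (fun y => B y y) (B y + B.flip y) y := by
      simpa using B.hasFDerivAt.clm_apply (hasFDerivAt_id y)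
    convert (hgy.sub (fderiv ℝ g x).hasFDerivAt).sub (hBy.const_smul (2 : ℝ)⁻¹) using 1
    · rfl
    rw [show B.flip y = B y from ContinuousLinearMap.ext fun v => hsymm v y, ← two_smul ℝ (B y),
      smul_smul]
    norm_num
  have hsmall : (fun y => fderiv ℝ g (x + y) - fderiv ℝ g x - B y) =o[𝓝 0] fun y => ‖y‖ ^ 1 := by
    simpa using (hasFDerivAt_iff_isLittleO_nhds_zero.1
      ((hg.fderiv_right (m := 1) le_rfl).differentiableAt one_ne_zero).hasFDerivAt).norm_right
  have hnhds : 𝓝[ball (0 : E) δ] 0 = 𝓝 0 := nhdsWithin_eq_nhds.2 (ball_mem_nhds 0 hδ)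
  have := (convex_ball (0 : E) δ).isLittleO_pow_succ (mem_ball_self hδ)
    (fun y hy => (hderiv y hy).hasFDerivWithinAt) (n := 1) (by simpa [hnhds] using hsmall)
  rw [hnhds] at this
  convert this using 2 with y
  · simp only [add_zero, map_zero, smul_zero, sub_zero]
    abel
  · simp

theorem ContDiffAt.isBigO_taylor_one {g : E → F} {x : E} (hg : ContDiffAt ℝ 2 g x) :
    (fun y => g (x + y) - g x - fderiv ℝ g x y) =O[𝓝 0] fun y => ‖y‖ ^ 2 := by
  have hquad : (fun y => (2 : ℝ)⁻¹ • fderiv ℝ (fderiv ℝ g) x y y) =O[𝓝 0] fun y => ‖y‖ ^ 2 := by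
    set B := fderiv ℝ (fderiv ℝ g) x
    refine Asymptotics.IsBigO.of_bound ‖B‖ (Eventually.of_forall fun y => ?_)
    calc ‖(2 : ℝ)⁻¹ • B y y‖ ≤ ‖B y y‖ := by
          rw [norm_smul]
          exact mul_le_of_le_one_left (norm_nonneg _) (by norm_num)
      _ ≤ ‖B‖ * ‖y‖ * ‖y‖ := B.le_opNorm₂ y y
      _ = ‖B‖ * ‖‖y‖ ^ 2‖ := by simp [sq, mul_assoc]
  simpa using hg.isLittleO_taylor_two.isBigO.add hquad

theorem ContDiffAt.fderiv_fderiv_apply_le_of_eventually_le {g : E → ℝ} {x : E}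
    (hg : ContDiffAt ℝ 2 g x) (hcrit : fderiv ℝ g x = 0) {C : ℝ}
    (hle : ∀ᶠ y in 𝓝 0, g (x + y) ≤ g x + C * ‖y‖ ^ 2) (d : E) :
    fderiv ℝ (fderiv ℝ g) x d d ≤ 2 * C * ‖d‖ ^ 2 := by
  set B := fderiv ℝ (fderiv ℝ g) x
  have hray : Tendsto (fun t : ℝ => t • d) (𝓝[>] 0) (𝓝 0) := by
    have hcont : Continuous fun t : ℝ => t • d := by fun_prop
    simpa using (hcont.tendsto 0).mono_left nhdsWithin_le_nhds
  have hsq : (fun t : ℝ => ‖t • d‖ ^ 2) =O[𝓝[>] 0] fun t => t ^ 2 :=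
    Asymptotics.IsBigO.of_bound (‖d‖ ^ 2) (Eventually.of_forall fun t => by
      simp [norm_smul, mul_pow, mul_comm])
  have hrem := ((hg.isLittleO_taylor_two.comp_tendsto hray).trans_isBigO hsq).tendsto_div_nhds_zero
  have hlim : Tendsto (fun t : ℝ => (2 : ℝ)⁻¹ * B d d +
      (g (x + t • d) - g x - fderiv ℝ g x (t • d) - (2 : ℝ)⁻¹ • B (t • d) (t • d)) / t ^ 2)
      (𝓝[>] 0) (𝓝 ((2 : ℝ)⁻¹ * B d d)) := by
    simpa using hrem.const_add ((2 : ℝ)⁻¹ * B d d)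
  have hbound : ∀ᶠ t : ℝ in 𝓝[>] 0, (2 : ℝ)⁻¹ * B d d +
      (g (x + t • d) - g x - fderiv ℝ g x (t • d) - (2 : ℝ)⁻¹ • B (t • d) (t • d)) / t ^ 2
        ≤ C * ‖d‖ ^ 2 := by
    filter_upwards [hray.eventually hle, self_mem_nhdsWithin] with t ht (htpos : 0 < t)
    have hquotient : (2 : ℝ)⁻¹ * B d d +
        (g (x + t • d) - g x - fderiv ℝ g x (t • d) - (2 : ℝ)⁻¹ • B (t • d) (t • d)) / t ^ 2 =
          (g (x + t • d) - g x) / t ^ 2 := by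
      simp only [hcrit, zero_apply, map_smul, smul_apply, smul_eq_mul]
      field_simp
      ring
    rw [hquotient, div_le_iff₀ (by positivity)]
    rw [norm_smul, Real.norm_eq_abs, abs_of_pos htpos] at ht
    linarith
  linarith [le_of_tendsto hlim hbound]

end SecondOrder

theorem mixedDeriv_eq_fderiv_fderiv {G : ℂ → ℝ} {z : ℂ}
    (hG : DifferentiableAt ℝ (fderiv ℝ G) z) :
    mixedDeriv G z = (1 / 4) * (fderiv ℝ (fderiv ℝ G) z 1 1 + fderiv ℝ (fderiv ℝ G) z I I) := by
  simp [mixedDeriv, fderiv_clm_apply hG (differentiableAt_const _)]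

theorem mixedDeriv_comp {F : Type*} [NormedAddCommGroup F] [NormedSpace ℂ F] {u : F → ℝ}
    {f : ℂ → F} {z : ℂ} (hu : ContDiffAt ℝ 2 u (f z)) (hf : ContDiffAt ℂ 2 f z) :
    mixedDeriv (fun w => u (f w)) z = (1 / 4) *
      (fderiv ℝ (fderiv ℝ u) (f z) (deriv f z) (deriv f z) +
        fderiv ℝ (fderiv ℝ u) (f z) (I • deriv f z) (I • deriv f z)) := by
  have hfℝ : ContDiffAt ℝ 2 f z := hf.restrict_scalars ℝ
  have hDf : ∀ d : ℂ, fderiv ℝ f z d = d • deriv f z := fun d => by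
    rw [(hf.differentiableAt two_ne_zero).fderiv_restrictScalars ℝ]
    simp
  have hharm : fderiv ℝ (fderiv ℝ f) z 1 1 + fderiv ℝ (fderiv ℝ f) z I I = 0 := by
    simpa [InnerProductSpace.laplacian_eq_iteratedFDeriv_complexPlane, iteratedFDeriv_two_apply]
      using hf.harmonicAt.2.self_of_nhds
  have hDu : fderiv ℝ u (f z) (fderiv ℝ (fderiv ℝ f) z 1 1) +
      fderiv ℝ u (f z) (fderiv ℝ (fderiv ℝ f) z I I) = 0 := by
    rw [← map_add, hharm, map_zero]
  have hcomp : ContDiffAt ℝ 2 (u ∘ f) z := hu.comp z hfℝ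
  rw [show (fun w => u (f w)) = u ∘ f from rfl, mixedDeriv_eq_fderiv_fderiv
      ((hcomp.fderiv_right (m := 1) le_rfl).differentiableAt one_ne_zero),
    hu.fderiv_fderiv_comp_apply hfℝ, hu.fderiv_fderiv_comp_apply hfℝ, hDf, hDf, one_smul]
  linear_combination (1 / 4 : ℝ) * hDu

section LeviForm

variable {n : ℕ} {u : (Fin n → ℂ) → ℝ}

theorem leviForm_eq_fderiv_fderiv {P : Fin n → ℂ} (hu : ContDiffAt ℝ 2 u P) (ξ : Fin n → ℂ) :
    leviForm u P ξ = (1 / 4) *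
      (fderiv ℝ (fderiv ℝ u) P ξ ξ + fderiv ℝ (fderiv ℝ u) P (I • ξ) (I • ξ)) := by
  have hline : ContDiffAt ℂ 2 (fun t : ℂ => P + t • ξ) 0 := by fun_prop
  have hderiv : deriv (fun t : ℂ => P + t • ξ) 0 = ξ := by
    simpa using (((hasDerivAt_id (0 : ℂ)).smul_const ξ).const_add P).deriv
  simpa [leviForm, hderiv] using mixedDeriv_comp (by simpa using hu) hline

theorem mixedDeriv_comp_eq_leviForm {f : ℂ → Fin n → ℂ} {z : ℂ} (hu : ContDiffAt ℝ 2 u (f z))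
    (hf : ContDiffAt ℂ 2 f z) : mixedDeriv (fun w => u (f w)) z = leviForm u (f z) (deriv f z) := by
  rw [mixedDeriv_comp hu hf, leviForm_eq_fderiv_fderiv hu]

theorem leviForm_smul {P : Fin n → ℂ} (hu : ContDiffAt ℝ 2 u P) (c : ℝ) (ξ : Fin n → ℂ) :
    leviForm u P (c • ξ) = c ^ 2 * leviForm u P ξ := by
  rw [leviForm_eq_fderiv_fderiv hu, leviForm_eq_fderiv_fderiv hu, smul_comm I c ξ]
  simp only [map_smul, smul_apply, smul_eq_mul]
  ring

theorem leviForm_norm_sq_comp (L : (Fin n → ℂ) →L[ℂ] ℂ) (P ξ : Fin n → ℂ) :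
    leviForm (fun z => ‖L (z - P)‖ ^ 2) P ξ = ‖L ξ‖ ^ 2 := by
  have hline : (fun t : ℂ => L (P + t • ξ - P)) = fun t => t • L ξ := by simp
  have hderiv : deriv (fun t : ℂ => t • L ξ) 0 = L ξ := by simp
  have hD2 : ∀ x, fderiv ℝ (fderiv ℝ fun w : ℂ => ‖w‖ ^ 2) x = 2 • innerSL ℝ := fun x => by
    rw [fderiv_norm_sq, ← FunLike.coe_smul]
    exact ContinuousLinearMap.fderiv _
  have := mixedDeriv_comp (u := fun w : ℂ => ‖w‖ ^ 2) (f := fun t : ℂ => L (P + t • ξ - P))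
    (z := 0) (contDiff_norm_sq ℝ).contDiffAt (by fun_prop)
  rw [hline, hderiv] at this
  rw [leviForm, this, hD2]
  simp only [smul_apply, smul_eq_mul]
  rw [innerSL_apply_apply, innerSL_apply_apply]
  simp
  ring

end LeviForm

section Subharmonic

open Real InnerProductSpace

variable {u h : ℂ → ℝ} {s K : Set ℂ}

theorem SubharmonicOn.le_circleAverage (hu : SubharmonicOn u s) {z : ℂ} {r : ℝ} (hr : 0 < r)
    (hzr : closedBall z r ⊆ s) : u z ≤ circleAverage u z r :=
  hu.2 z r hr hzr

theorem SubharmonicOn.mono (hu : SubharmonicOn u s) {t : Set ℂ} (hts : t ⊆ s) :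
    SubharmonicOn u t :=
  ⟨hu.1.mono hts, fun z r hr hzr => hu.2 z r hr (hzr.trans hts)⟩

theorem subharmonicOn_const (c : ℝ) (s : Set ℂ) : SubharmonicOn (fun _ => c) s :=
  ⟨continuousOn_const, fun z r _ _ => (circleAverage_const c z r).ge⟩

theorem SubharmonicOn.add_harmonicOnNhd (hu : SubharmonicOn u s) (hh : HarmonicOnNhd h s) :
    SubharmonicOn (fun z => u z + h z) s := by
  refine ⟨hu.1.add hh.contDiffOn.continuousOn, fun z r hr hzr => ?_⟩
  have hzr' : closedBall z |r| ⊆ s := by rwa [abs_of_pos hr]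
  have hsph : sphere z |r| ⊆ s := sphere_subset_closedBall.trans hzr'
  show u z + h z ≤ circleAverage (fun z => u z + h z) z r
  rw [circleAverage_fun_add (hu.1.mono hsph).circleIntegrable'
    (hh.contDiffOn.continuousOn.mono hsph).circleIntegrable', (hh.mono hzr').circleAverage_eq]
  linarith [hu.le_circleAverage hr hzr]

theorem harmonicOnNhd_const_mul_log_norm (c : ℝ) (hs : (0 : ℂ) ∉ s) :
    HarmonicOnNhd (fun z : ℂ => c * Real.log ‖z‖) s := fun _ hz =>
  (analyticAt_id.harmonicAt_log_norm (ne_of_mem_of_not_mem hz hs)).const_smul (c := c)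

theorem eqOn_sphere_of_le_circleAverage {c : ℂ} {R m : ℝ} (hu : ContinuousOn u (sphere c |R|))
    (hle : ∀ z ∈ sphere c |R|, u z ≤ m) (hm : m ≤ circleAverage u c R) :
    ∀ z ∈ sphere c |R|, u z = m := by
  intro z hz
  by_contra hne
  obtain ⟨θ₀, hθ₀, rfl⟩ := (image_circleMap_Ioc c R).symm ▸ hz
  have hcont : Continuous fun θ => m - u (circleMap c R θ) :=
    continuous_const.sub (hu.comp_continuous (continuous_circleMap c R) (circleMap_mem_sphere' c R))
  have hpos : 0 < circleAverage (fun z => m - u z) c R := by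
    refine smul_pos (by positivity) (intervalIntegral.integral_pos two_pi_pos hcont.continuousOn
      (fun θ _ => sub_nonneg.2 (hle _ (circleMap_mem_sphere' c R θ))) ?_)
    exact ⟨θ₀, Ioc_subset_Icc_self hθ₀, sub_pos.2 (lt_of_le_of_ne (hle _ hz) hne)⟩
  rw [circleAverage_fun_sub (circleIntegrable_const m c R) hu.circleIntegrable',
    circleAverage_const] at hpos
  linarith

/- Among the maximizers, one of largest norm cannot be interior: `u` would be constant on a small
circle around it, and by the parallelogram law one of the two points `z₁ ± r` of that circle is
farther from the origin. -/
theorem SubharmonicOn.exists_mem_frontier_isMaxOn (hu : SubharmonicOn u K) (hK : IsCompact K)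
    (hne : K.Nonempty) : ∃ z ∈ frontier K, IsMaxOn u K z := by
  obtain ⟨z₀, hz₀K, hz₀⟩ := hK.exists_isMaxOn hne hu.1
  have hA : IsCompact (K ∩ u ⁻¹' {u z₀}) :=
    hK.of_isClosed_subset (hu.1.preimage_isClosed_of_isClosed hK.isClosed isClosed_singleton)
      inter_subset_left
  obtain ⟨z₁, ⟨hz₁K, hz₁⟩, hz₁max⟩ :=
    hA.exists_isMaxOn ⟨z₀, hz₀K, rfl⟩ continuous_norm.continuousOn
  have hz₁max' : IsMaxOn u K z₁ := fun z hz => (hz₁ : u z₁ = u z₀) ▸ hz₀ hz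
  refine ⟨z₁, ⟨subset_closure hz₁K, fun hint => ?_⟩, hz₁max'⟩
  obtain ⟨r, hr, hball⟩ := nhds_basis_closedBall.mem_iff.1 (mem_interior_iff_mem_nhds.1 hint)
  have hsph : sphere z₁ |r| ⊆ K := by
    rw [abs_of_pos hr]
    exact sphere_subset_closedBall.trans hball
  have hconst := eqOn_sphere_of_le_circleAverage (hu.1.mono hsph) (fun z hz => hz₁max' (hsph hz))
    (hu.le_circleAverage hr hball)
  have hfar : ∀ w : ℂ, ‖w‖ = r → ‖z₁ + w‖ ≤ ‖z₁‖ := fun w hw => by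
    have hmem : z₁ + w ∈ sphere z₁ |r| := by simp [hw, abs_of_pos hr]
    exact hz₁max ⟨hsph hmem, (hconst _ hmem).trans hz₁⟩
  have h₁ := hfar r (by simp [hr.le])
  have h₂ := hfar (-r) (by simp [hr.le])
  have hpar := parallelogram_law_with_norm ℝ z₁ (r : ℂ)
  rw [← sub_eq_add_neg] at h₂
  simp only [Complex.norm_real, Real.norm_eq_abs, abs_of_pos hr] at hpar
  nlinarith [norm_nonneg (z₁ + r), norm_nonneg (z₁ - r), norm_nonneg z₁]

theorem SubharmonicOn.le_of_le_on_annulus_frontier {ρ R M : ℝ}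
    (hu : SubharmonicOn u (closedBall 0 R \ ball 0 ρ)) (hin : ∀ z : ℂ, ‖z‖ = ρ → u z ≤ M)
    (hout : ∀ z : ℂ, ‖z‖ = R → u z ≤ M) {z : ℂ} (hz : z ∈ closedBall 0 R \ ball 0 ρ) :
    u z ≤ M := by
  have hK : IsCompact (closedBall (0 : ℂ) R \ ball 0 ρ) :=
    (isCompact_closedBall 0 R).diff isOpen_ball
  obtain ⟨z₂, hfr, hmax⟩ := hu.exists_mem_frontier_isMaxOn hK ⟨z, hz⟩
  refine (hmax hz).trans ?_
  have hz₂ : z₂ ∈ closedBall (0 : ℂ) R \ ball 0 ρ := hK.isClosed.frontier_subset hfr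
  have hnot : z₂ ∉ ball (0 : ℂ) R \ closedBall 0 ρ := fun h => hfr.2 <|
    interior_maximal (sdiff_subset_sdiff ball_subset_closedBall ball_subset_closedBall)
      (isOpen_ball.sdiff isClosed_closedBall) h
  simp only [Set.mem_sdiff, mem_closedBall_zero_iff, mem_ball_zero_iff, not_lt, not_and, not_le]
    at hz₂ hnot
  rcases hz₂.1.lt_or_eq with hlt | heq
  · exact hin z₂ (le_antisymm (hnot hlt) hz₂.2)
  · exact hout z₂ heq

theorem SubharmonicOn.add_mul_log_norm_le {R A B δ ε : ℝ}
    (hu : SubharmonicOn u (closedBall 0 R \ {0})) (hδ : 0 < δ)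
    (hB : ∀ z : ℂ, z ≠ 0 → ‖z‖ < δ → u z ≤ B) (hA : ∀ z : ℂ, ‖z‖ = R → u z ≤ A) (hε : 0 < ε)
    {z : ℂ} (hz : z ∈ closedBall 0 R \ {0}) : u z + ε * Real.log ‖z‖ ≤ A + ε * Real.log R := by
  set ρ := min (min (δ / 2) ‖z‖) (exp ((A - B) / ε + Real.log R))
  have hρ : 0 < ρ := by
    have := norm_pos_iff.2 hz.2
    positivity
  have hρB : B + ε * Real.log ρ ≤ A + ε * Real.log R := by
    have hlogρ := Real.log_le_log hρ (min_le_right _ _)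
    rw [Real.log_exp] at hlogρ
    have := mul_le_mul_of_nonneg_left hlogρ hε.le
    rw [mul_add, mul_div_cancel₀ _ hε.ne'] at this
    linarith
  have hsub : closedBall (0 : ℂ) R \ ball 0 ρ ⊆ closedBall 0 R \ {0} :=
    sdiff_subset_sdiff_right (singleton_subset_iff.2 (mem_ball_self hρ))
  have hharm := harmonicOnNhd_const_mul_log_norm ε (s := closedBall 0 R \ ball 0 ρ)
    fun h => h.2 (mem_ball_self hρ)
  refine ((hu.mono hsub).add_harmonicOnNhd hharm).le_of_le_on_annulus_frontier
    (fun w hw => ?_) (fun w hw => ?_) ⟨hz.1, ?_⟩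
  · have hρδ : ρ < δ := (min_le_left _ _).trans_lt ((min_le_left _ _).trans_lt (half_lt_self hδ))
    rw [hw]
    linarith [hB w (norm_pos_iff.1 (hw ▸ hρ)) (hw ▸ hρδ)]
  · rw [hw]
    linarith [hA w hw]
  · simpa using show ρ ≤ ‖z‖ from (min_le_left _ _).trans (min_le_right _ _)

theorem SubharmonicOn.le_of_le_on_sphere_of_eventually_le {R A B : ℝ}
    (hu : SubharmonicOn u (closedBall 0 R \ {0})) (hbdd : ∀ᶠ z in 𝓝[≠] 0, u z ≤ B)
    (hA : ∀ z : ℂ, ‖z‖ = R → u z ≤ A) {z : ℂ} (hz : z ∈ closedBall 0 R \ {0}) : u z ≤ A := by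
  obtain ⟨δ, hδ, hδB⟩ := Metric.mem_nhdsWithin_iff.1 hbdd
  have hB : ∀ w : ℂ, w ≠ 0 → ‖w‖ < δ → u w ≤ B := fun w hw hwδ =>
    hδB ⟨mem_ball_zero_iff.2 hwδ, hw⟩
  set c := Real.log R - Real.log ‖z‖
  have hc : 0 ≤ c :=
    sub_nonneg.2 (Real.log_le_log (norm_pos_iff.2 hz.2) (mem_closedBall_zero_iff.1 hz.1))
  refine le_of_forall_pos_le_add fun η hη => ?_
  have hε : 0 < η / (c + 1) := by positivity
  have hεc : η / (c + 1) * c ≤ η := by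
    rw [div_mul_eq_mul_div, div_le_iff₀ (by positivity)]
    nlinarith
  linarith [hu.add_mul_log_norm_le hδ hB hA hε hz]

end Subharmonic

theorem le_norm_sq_of_subharmonicOn_div_norm_sq {g : ℂ → ℝ} {B : ℝ}
    (hle : ∀ z ∈ ball (0 : ℂ) 1, g z ≤ 1) (hbdd : ∀ᶠ z in 𝓝[≠] 0, g z / ‖z‖ ^ 2 ≤ B)
    (hsh : SubharmonicOn (fun z => g z / ‖z‖ ^ 2) (ball (0 : ℂ) 1 \ {0})) {z : ℂ}
    (hz : z ∈ ball (0 : ℂ) 1 \ {0}) : g z ≤ ‖z‖ ^ 2 := by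
  have hz1 : ‖z‖ < 1 := mem_ball_zero_iff.1 hz.1
  have hR : ∀ R ∈ Ioo ‖z‖ 1, g z / ‖z‖ ^ 2 ≤ 1 / R ^ 2 := fun R hR => by
    have hshR := hsh.mono (sdiff_subset_sdiff_left (closedBall_subset_ball hR.2))
    refine hshR.le_of_le_on_sphere_of_eventually_le hbdd (fun w hw => ?_)
      ⟨mem_closedBall_zero_iff.2 hR.1.le, hz.2⟩
    rw [hw]
    gcongr
    exact hle w (mem_ball_zero_iff.2 (hw ▸ hR.2))
  have hlim : Tendsto (fun R : ℝ => 1 / R ^ 2) (𝓝[<] 1) (𝓝 1) := by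
    have : ContinuousAt (fun R : ℝ => 1 / R ^ 2) 1 := by fun_prop (disch := norm_num)
    simpa using this.tendsto.mono_left nhdsWithin_le_nhds
  have := ge_of_tendsto hlim (Filter.mem_of_superset (Ioo_mem_nhdsLT hz1) hR)
  rwa [div_le_one (pow_pos (norm_pos_iff.2 hz.2) 2)] at this

theorem mixedDeriv_le_one {g : ℂ → ℝ} (hg : ContDiffAt ℝ 2 g 0) (hg0 : g 0 = 0)
    (hbound : ∀ z ∈ ball (0 : ℂ) 1, 0 ≤ g z ∧ g z ≤ 1)
    (hsh : SubharmonicOn (fun z => g z / ‖z‖ ^ 2) (ball (0 : ℂ) 1 \ {0})) :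
    mixedDeriv g 0 ≤ 1 := by
  have hcrit : fderiv ℝ g 0 = 0 := IsLocalMin.fderiv_eq_zero <| by
    filter_upwards [ball_mem_nhds (0 : ℂ) one_pos] with z hz
    exact hg0 ▸ (hbound z hz).1
  obtain ⟨c, hc⟩ := hg.isBigO_taylor_one.bound
  have hbdd : ∀ᶠ z in 𝓝[≠] (0 : ℂ), g z / ‖z‖ ^ 2 ≤ c := by
    filter_upwards [nhdsWithin_le_nhds hc, self_mem_nhdsWithin] with z hz (hz0 : z ≠ 0)
    simp only [zero_add, hg0, hcrit, sub_zero, zero_apply, norm_pow, norm_norm] at hz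
    rw [div_le_iff₀ (by positivity)]
    exact (le_abs_self _).trans hz
  have hD2 := hg.fderiv_fderiv_apply_le_of_eventually_le hcrit (C := 1) <| by
    filter_upwards [ball_mem_nhds (0 : ℂ) one_pos] with y hy
    rcases eq_or_ne y 0 with rfl | hy0
    · simp [hg0]
    simpa [hg0] using le_norm_sq_of_subharmonicOn_div_norm_sq (fun z hz => (hbound z hz).2)
      hbdd hsh ⟨hy, hy0⟩
  have h1 := hD2 1
  have hI := hD2 I
  rw [mixedDeriv_eq_fderiv_fderiv ((hg.fderiv_right (m := 1) le_rfl).differentiableAt one_ne_zero)]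
  simp only [norm_one, Complex.norm_I, one_pow, mul_one] at h1 hI
  linarith

theorem leviForm_deriv_le_one {n : ℕ} {u : (Fin n → ℂ) → ℝ} {f : ℂ → Fin n → ℂ}
    (hu : ContDiffAt ℝ 2 u (f 0)) (huf : u (f 0) = 0) (hf : DifferentiableOn ℂ f (ball 0 1))
    (hbound : ∀ z ∈ ball (0 : ℂ) 1, 0 ≤ u (f z) ∧ u (f z) ≤ 1)
    (hsh : SubharmonicOn (fun z => u (f z) / ‖z‖ ^ 2) (ball (0 : ℂ) 1 \ {0})) :
    leviForm u (f 0) (deriv f 0) ≤ 1 := by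
  have hf2 : ContDiffAt ℂ 2 f 0 := (hf.analyticAt (ball_mem_nhds 0 one_pos)).contDiffAt
  rw [← mixedDeriv_comp_eq_leviForm hu hf2]
  exact mixedDeriv_le_one (hu.comp 0 (hf2.restrict_scalars ℝ)) huf hbound hsh

section Metrics

variable {n : ℕ} {Ω : Set (Fin n → ℂ)} {P ξ : Fin n → ℂ}

theorem kobayashiMetric_nonneg : 0 ≤ kobayashiMetric Ω P ξ :=
  Real.sInf_nonneg fun _ hα => hα.1.le

theorem pshMetric_zero : pshMetric Ω P 0 = 0 := by
  refine le_antisymm (Real.sSup_le ?_ le_rfl)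
    (Real.sSup_nonneg fun _ ⟨_, _, _, _, hx⟩ => hx ▸ Real.sqrt_nonneg _)
  rintro _ ⟨u, hu, -, -, rfl⟩
  have hzero : leviForm u P 0 = 0 := by simpa using leviForm_smul hu 0 0
  simp [hzero]

theorem pshMetric_le_kobayashiMetric_of_pos (hk : 0 < kobayashiMetric Ω P ξ) :
    pshMetric Ω P ξ ≤ kobayashiMetric Ω P ξ := by
  refine Real.sSup_le ?_ hk.le
  rintro _ ⟨u, hu, huP, ⟨f, hf, -, rfl, hf', hbound, hsh⟩, rfl⟩
  have hle := leviForm_deriv_le_one hu huP hf hbound hsh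
  rw [show deriv f 0 = _ from hf', leviForm_smul hu, inv_pow, inv_mul_le_iff₀ (by positivity),
    mul_one] at hle
  exact (Real.sqrt_le_left hk.le).2 hle

theorem pshMetric_eq_zero_of_kobayashiMetric_eq_zero (hP : P ∈ Ω)
    (hk : kobayashiMetric Ω P ξ = 0) (hξ : ξ ≠ 0) : pshMetric Ω P ξ = 0 := by
  refine Real.sSup_of_not_bddAbove fun ⟨b, hb⟩ => ?_
  obtain ⟨L, hL⟩ := SeparatingDual.exists_eq_one (R := ℂ) hξ
  set L' : (Fin n → ℂ) →L[ℂ] ℂ := ((|b| + 1 : ℝ) : ℂ) • L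
  have hL' : ContDiff ℝ 2 fun z => L' (z - P) :=
    (L'.restrictScalars ℝ).contDiff.comp (contDiff_id.sub contDiff_const)
  have hmem := hb ⟨fun z => ‖L' (z - P)‖ ^ 2, ((contDiff_norm_sq ℝ).comp hL').contDiffAt, by simp,
    ⟨fun _ => P, differentiableOn_const P, fun _ _ => subset_closure hP, rfl, by simp [hk],
      fun _ _ => by simp, by simpa using subharmonicOn_const 0 (ball (0 : ℂ) 1 \ {0})⟩, rfl⟩
  rw [leviForm_norm_sq_comp, Real.sqrt_sq (norm_nonneg _)] at hmem
  simp only [L', smul_apply, hL, smul_eq_mul, mul_one, Complex.norm_real, Real.norm_eq_abs] at hmem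
  linarith [le_abs_self b, le_abs_self (|b| + 1)]

end Metrics

theorem stmt16_general (n : ℕ) (Ω : Set (Fin n → ℂ))
    (P : Fin n → ℂ) (hP : P ∈ Ω) (ξ : Fin n → ℂ) :
    pshMetric Ω P ξ ≤ kobayashiMetric Ω P ξ := by
  rcases kobayashiMetric_nonneg.lt_or_eq with hk | hk
  · exact pshMetric_le_kobayashiMetric_of_pos hk
  rcases eq_or_ne ξ 0 with rfl | hξ
  · exact pshMetric_zero.trans_le kobayashiMetric_nonneg
  · exact (pshMetric_eq_zero_of_kobayashiMetric_eq_zero hP hk.symm hξ).trans_le hk.le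

/-- The plurisubharmonic metric is bounded above by the Kobayashi metric. -/
theorem stmt16 (n : ℕ) (Ω : Set (Fin n → ℂ)) (hopen : IsOpen Ω)
    (P : Fin n → ℂ) (hP : P ∈ Ω) (ξ : Fin n → ℂ) :
    pshMetric Ω P ξ ≤ kobayashiMetric Ω P ξ :=
  stmt16_general n Ω P hP ξ
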